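/- Let G be a Gauss diagram that can be transformed by a sequence of n crossing changes into a Gauss diagram G' whose writhe polynomial vanishes, W_{G'}(t) = 0. Then ∑_{k ∈ ℤ∖{0}} |J_k(G)| ≤ 2n. -/

import Mathlib

open scoped Classical

/-- A Gauss diagram with `n` chords: the `2n` marked points live on the cyclic group
`ZMod (2*n)` (the oriented circle); each chord `i` is the ordered pair
`(tail i, head i)` of marked points and carries a sign (writhe) `sign i ∈ {+1, -1}`;
all `2n` endpoints are distinct. -/
structure GaussDiagram (n : ℕ) where
  tail : Fin n → ZMod (2 * n)
  head : Fin n → ZMod (2 * n)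
  sign : Fin n → ℤ
  sign_mem : ∀ i, sign i = 1 ∨ sign i = -1
  endpoints_inj : Function.Injective
    (fun p : Fin n × Bool => if p.2 then head p.1 else tail p.1)

namespace GaussDiagram

variable {n : ℕ}

/-- `x` lies on the open arc running in the circle's orientation from `a` to `b`. -/
def arcMem (a b x : ZMod (2 * n)) : Prop :=
  0 < (x - a).val ∧ (x - a).val < (b - a).val

/-- `x` lies on the open oriented arc from the tail to the head of chord `i`. -/
def inArc (G : GaussDiagram n) (i : Fin n) (x : ZMod (2 * n)) : Prop :=
  arcMem (G.tail i) (G.head i) x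

/-- Chords `i` and `j` are linked: exactly one endpoint of `j` lies on the open
oriented arc from the tail to the head of `i`. -/
def linked (G : GaussDiagram n) (i j : Fin n) : Prop :=
  Xor' (G.inArc i (G.tail j)) (G.inArc i (G.head j))

/-- Chord `j` crosses chord `i` from right to left. -/
def crossesRL (G : GaussDiagram n) (i j : Fin n) : Prop :=
  G.linked i j ∧ G.inArc i (G.head j)

/-- Chord `j` crosses chord `i` from left to right. -/
def crossesLR (G : GaussDiagram n) (i j : Fin n) : Prop :=
  G.linked i j ∧ G.inArc i (G.tail j)

/-- The index of the chord `i`: `Ind(i) = r₊ − r₋ − l₊ + l₋`. -/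
noncomputable def ind (G : GaussDiagram n) (i : Fin n) : ℤ :=
  ((Finset.univ.filter fun j => G.crossesRL i j ∧ G.sign j = 1).card : ℤ)
    - ((Finset.univ.filter fun j => G.crossesRL i j ∧ G.sign j = -1).card : ℤ)
    - ((Finset.univ.filter fun j => G.crossesLR i j ∧ G.sign j = 1).card : ℤ)
    + ((Finset.univ.filter fun j => G.crossesLR i j ∧ G.sign j = -1).card : ℤ)

/-- The `k`-th writhe `J_k(G)`: the number of positive chords of index `k` minus the
number of negative chords of index `k`. -/
noncomputable def J (G : GaussDiagram n) (k : ℤ) : ℤ :=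
  ((Finset.univ.filter fun i => G.ind i = k ∧ G.sign i = 1).card : ℤ)
    - ((Finset.univ.filter fun i => G.ind i = k ∧ G.sign i = -1).card : ℤ)

/-- The writhe polynomial `W_G(t) = ∑_{Ind(c) ≠ 0} w(c) t^{Ind(c)} = ∑_{k ≠ 0} J_k(G) t^k`. -/
noncomputable def writhePoly (G : GaussDiagram n) : LaurentPolynomial ℤ :=
  ∑ i ∈ Finset.univ.filter (fun i => G.ind i ≠ 0),
    LaurentPolynomial.C (G.sign i) * LaurentPolynomial.T (G.ind i)

/-- The odd writhe `J(G) = ∑_{c ∈ Odd(G)} w(c)`. -/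
noncomputable def oddWrithe (G : GaussDiagram n) : ℤ :=
  ∑ i ∈ Finset.univ.filter (fun i => Odd (G.ind i)), G.sign i

/-- `G'` is obtained from `G` by a crossing change at the chord `c`: the tail and head
of `c` are interchanged and its sign is negated, all other chords being unchanged. -/
def IsCrossingChangeAt (G G' : GaussDiagram n) (c : Fin n) : Prop :=
  G'.tail c = G.head c ∧ G'.head c = G.tail c ∧ G'.sign c = -G.sign c ∧
    ∀ j : Fin n, j ≠ c →
      G'.tail j = G.tail j ∧ G'.head j = G.head j ∧ G'.sign j = G.sign j

/-- `G'` is obtained from `G` by a crossing change (at some chord). -/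
def IsCrossingChange (G G' : GaussDiagram n) : Prop :=
  ∃ c, IsCrossingChangeAt G G' c

/-- `G'` is obtained from `G` by a sequence of `m` crossing changes. -/
def ChangedBy (m : ℕ) (G G' : GaussDiagram n) : Prop :=
  ∃ f : ℕ → GaussDiagram n, f 0 = G ∧ f m = G' ∧
    ∀ i < m, IsCrossingChange (f i) (f (i + 1))

end GaussDiagram

/-! A crossing change at `c` reverses the arc of `c`, which swaps its two sides: `Ind(c)` is
negated, while every other index is unchanged, since the reversed chord `c` crosses it from the
other side but with the opposite sign. So `J_k` changes only at `k = ±Ind(c)`, by `w(c)` each,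
and `∑_{k ≠ 0} |J_k|` drops by at most `2` per crossing change. All indices lie in `[-n, n]`,
so the sum is a finite sum over a fixed range, and it vanishes for `G'`. -/

namespace GaussDiagram

open Finset

variable {n : ℕ}

/-- Writing `u, v, w` for the values of `x - a, b - a, x - b`, we have `u ≡ w + v (mod 2n)` and
`(a - b).val = 2n - v`, and both sides say that `w + v` wraps around modulo `2n`. -/
lemma arcMem_iff_not_arcMem_swap [NeZero n] {a b x : ZMod (2 * n)} (hab : a ≠ b)
    (hxa : x ≠ a) (hxb : x ≠ b) : arcMem a b x ↔ ¬arcMem b a x := by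
  have hu : (x - a).val = ((x - b).val + (b - a).val) % (2 * n) := by
    rw [← ZMod.val_add, sub_add_sub_cancel]
  have hv : (a - b).val = 2 * n - (b - a).val := by
    rw [← neg_sub, ZMod.neg_val, if_neg (sub_ne_zero.2 hab.symm)]
  have hu_pos : 0 < (x - a).val := ZMod.val_pos.2 (sub_ne_zero.2 hxa)
  have hw_pos : 0 < (x - b).val := ZMod.val_pos.2 (sub_ne_zero.2 hxb)
  have hw_lt : (x - b).val < 2 * n := ZMod.val_lt _
  have hv_lt : (b - a).val < 2 * n := ZMod.val_lt _
  unfold arcMem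
  rw [hv]
  rcases Nat.lt_or_ge ((x - b).val + (b - a).val) (2 * n) with hwrap | hwrap
  · rw [Nat.mod_eq_of_lt hwrap] at hu
    omega
  · rw [Nat.mod_eq_sub_mod hwrap, Nat.mod_eq_of_lt (by omega)] at hu
    omega

lemma tail_ne_head (G : GaussDiagram n) (i j : Fin n) : G.tail i ≠ G.head j := fun h => by
  simpa using G.endpoints_inj (a₁ := (i, false)) (a₂ := (j, true)) (by simpa using h)

lemma tail_injective (G : GaussDiagram n) : Function.Injective G.tail := fun i j h => by
  simpa using G.endpoints_inj (a₁ := (i, false)) (a₂ := (j, false)) (by simpa using h)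

lemma head_injective (G : GaussDiagram n) : Function.Injective G.head := fun i j h => by
  simpa using G.endpoints_inj (a₁ := (i, true)) (a₂ := (j, true)) (by simpa using h)

lemma card_filter_sign_sub_card_filter_sign (G : GaussDiagram n) (P : Fin n → Prop)
    [DecidablePred P] :
    (#{j | P j ∧ G.sign j = 1} : ℤ) - #{j | P j ∧ G.sign j = -1}
      = ∑ j, if P j then G.sign j else 0 := by
  simp only [card_filter, Nat.cast_sum, ← sum_sub_distrib]
  refine sum_congr rfl fun j _ => ?_
  rcases G.sign_mem j with hs | hs <;> by_cases hP : P j <;> simp [hs, hP]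

lemma linked_iff (G : GaussDiagram n) (i j : Fin n) :
    G.linked i j ↔ (G.inArc i (G.tail j) ↔ ¬G.inArc i (G.head j)) :=
  xor_iff_iff_not

noncomputable def indContrib (G : GaussDiagram n) (i j : Fin n) : ℤ :=
  (if G.crossesRL i j then G.sign j else 0) - (if G.crossesLR i j then G.sign j else 0)

lemma ind_eq_sum_indContrib (G : GaussDiagram n) (i : Fin n) :
    G.ind i = ∑ j, G.indContrib i j := by
  rw [ind, sub_add, card_filter_sign_sub_card_filter_sign,
    card_filter_sign_sub_card_filter_sign, ← sum_sub_distrib]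
  rfl

lemma J_eq_sum (G : GaussDiagram n) (k : ℤ) :
    G.J k = ∑ i, if G.ind i = k then G.sign i else 0 :=
  card_filter_sign_sub_card_filter_sign G (G.ind · = k)

lemma abs_indContrib_le_one (G : GaussDiagram n) (i j : Fin n) : |G.indContrib i j| ≤ 1 := by
  unfold indContrib
  rcases G.sign_mem j with hs | hs <;> split_ifs <;> simp [hs]

lemma abs_ind_le (G : GaussDiagram n) (i : Fin n) : |G.ind i| ≤ n := by
  rw [ind_eq_sum_indContrib]
  calc |∑ j, G.indContrib i j| ≤ ∑ j, |G.indContrib i j| := abs_sum_le_sum_abs _ _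
    _ ≤ ∑ _j : Fin n, (1 : ℤ) := sum_le_sum fun j _ => G.abs_indContrib_le_one i j
    _ = n := by simp

lemma J_eq_zero_of_lt_abs (G : GaussDiagram n) {k : ℤ} (hk : n < |k|) : G.J k = 0 := by
  rw [J_eq_sum]
  refine sum_eq_zero fun i _ => if_neg fun hi => ?_
  have := G.abs_ind_le i
  rw [hi] at this
  omega

lemma finsum_abs_J_eq_sum (G : GaussDiagram n) :
    ∑ᶠ (k : ℤ) (_ : k ≠ 0), |G.J k| = ∑ k ∈ (Icc (-n : ℤ) n).erase 0, |G.J k| := by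
  refine finsum_cond_eq_sum_of_cond_iff _ fun {k} hk => ?_
  have hk_le : |k| ≤ n := not_lt.1 fun hlt => hk (by rw [G.J_eq_zero_of_lt_abs hlt, abs_zero])
  simp only [mem_erase, mem_Icc, ← abs_le, hk_le, and_true]

lemma coeff_writhePoly (G : GaussDiagram n) {k : ℤ} (hk : k ≠ 0) :
    G.writhePoly.coeff k = G.J k := by
  simp only [writhePoly, ← LaurentPolynomial.single_eq_C_mul_T, AddMonoidAlgebra.coeff_sum]
  rw [J_eq_sum, sum_filter, Finset.sum_apply']
  refine sum_congr rfl fun i _ => ?_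
  by_cases h0 : G.ind i = 0
  · simp [h0, hk.symm]
  · rw [if_pos h0, AddMonoidAlgebra.coeff_single, Finsupp.single_apply]

section CrossingChange

variable {G G' : GaussDiagram n} {c : Fin n}

lemma IsCrossingChangeAt.inArc_of_ne (hc : IsCrossingChangeAt G G' c) {i : Fin n} (hi : i ≠ c)
    (x : ZMod (2 * n)) : G'.inArc i x ↔ G.inArc i x := by
  rw [inArc, inArc, (hc.2.2.2 i hi).1, (hc.2.2.2 i hi).2.1]

lemma IsCrossingChangeAt.inArc_self (hc : IsCrossingChangeAt G G' c) {x : ZMod (2 * n)}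
    (hxt : x ≠ G.tail c) (hxh : x ≠ G.head c) : G'.inArc c x ↔ ¬G.inArc c x := by
  have : NeZero n := ⟨c.pos.ne'⟩
  rw [inArc, inArc, hc.1, hc.2.1]
  exact arcMem_iff_not_arcMem_swap (G.tail_ne_head c c).symm hxh hxt

lemma IsCrossingChangeAt.indContrib_of_ne (hc : IsCrossingChangeAt G G' c) {i : Fin n}
    (hi : i ≠ c) (j : Fin n) : G'.indContrib i j = G.indContrib i j := by
  have harc := hc.inArc_of_ne hi
  obtain ⟨ht, hh, hs, hrest⟩ := hc
  by_cases hj : j = c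
  · subst hj
    simp only [indContrib, crossesRL, crossesLR, linked_iff, harc, ht, hh, hs]
    by_cases hA : G.inArc i (G.tail j) <;> by_cases hB : G.inArc i (G.head j) <;>
      simp [hA, hB]
  · unfold indContrib crossesRL crossesLR linked inArc
    rw [(hrest j hj).1, (hrest j hj).2.1, (hrest j hj).2.2, (hrest i hi).1, (hrest i hi).2.1]

/-- Reversing the chord `c` swaps the two sides of `c`, so every chord crossing `c` from
right to left now crosses it from left to right and vice versa. -/
lemma IsCrossingChangeAt.indContrib_self (hc : IsCrossingChangeAt G G' c) (j : Fin n) :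
    G'.indContrib c j = -G.indContrib c j := by
  by_cases hj : j = c
  · subst hj
    simp [indContrib, crossesRL, crossesLR, linked_iff, inArc, arcMem]
  · obtain ⟨ht, hh, hs⟩ := hc.2.2.2 j hj
    have hT := hc.inArc_self (fun h => hj (G.tail_injective h)) (G.tail_ne_head j c)
    have hH := hc.inArc_self (G.tail_ne_head c j).symm (fun h => hj (G.head_injective h))
    simp only [indContrib, crossesRL, crossesLR, linked_iff, ht, hh, hs, hT, hH]
    by_cases hA : G.inArc c (G.tail j) <;> by_cases hB : G.inArc c (G.head j) <;>
      simp [hA, hB]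

lemma IsCrossingChangeAt.ind_of_ne (hc : IsCrossingChangeAt G G' c) {i : Fin n} (hi : i ≠ c) :
    G'.ind i = G.ind i := by
  simp only [ind_eq_sum_indContrib, hc.indContrib_of_ne hi]

lemma IsCrossingChangeAt.ind_self (hc : IsCrossingChangeAt G G' c) : G'.ind c = -G.ind c := by
  simp only [ind_eq_sum_indContrib, hc.indContrib_self, sum_neg_distrib]

lemma IsCrossingChangeAt.J_eq (hc : IsCrossingChangeAt G G' c) (k : ℤ) :
    G.J k = G'.J k +
      G.sign c * ((if G.ind c = k then 1 else 0) + (if -G.ind c = k then 1 else 0)) := by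
  have hrest : ∑ j ∈ univ.erase c, (if G'.ind j = k then G'.sign j else 0)
      = ∑ j ∈ univ.erase c, (if G.ind j = k then G.sign j else 0) :=
    sum_congr rfl fun j hj => by
      rw [hc.ind_of_ne (ne_of_mem_erase hj), (hc.2.2.2 j (ne_of_mem_erase hj)).2.2]
  rw [J_eq_sum, J_eq_sum, ← add_sum_erase _ _ (mem_univ c), ← add_sum_erase _ _ (mem_univ c),
    hrest, hc.ind_self, hc.2.2.1]
  split_ifs <;> ring

end CrossingChange

lemma IsCrossingChange.sum_abs_J_le {G G' : GaussDiagram n} (h : IsCrossingChange G G')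
    (T : Finset ℤ) : ∑ k ∈ T, |G.J k| ≤ ∑ k ∈ T, |G'.J k| + 2 := by
  obtain ⟨c, hc⟩ := h
  have hterm : ∀ k ∈ T, |G.J k| ≤
      |G'.J k| + ((if G.ind c = k then 1 else 0) + (if -G.ind c = k then 1 else 0)) := by
    intro k _
    rw [hc.J_eq k]
    refine (abs_add_le _ _).trans_eq ?_
    rcases G.sign_mem c with hs | hs <;> rw [hs] <;> split_ifs <;> norm_num
  have hone : ∀ x : ℤ, ∑ k ∈ T, (if x = k then (1 : ℤ) else 0) ≤ 1 := fun x => by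
    rw [sum_ite_eq]
    split_ifs <;> norm_num
  have := sum_le_sum hterm
  rw [sum_add_distrib, sum_add_distrib] at this
  linarith [hone (G.ind c), hone (-G.ind c)]

lemma ChangedBy.sum_abs_J_le {m : ℕ} {G G' : GaussDiagram n} (h : ChangedBy m G G')
    (T : Finset ℤ) : ∑ k ∈ T, |G.J k| ≤ ∑ k ∈ T, |G'.J k| + 2 * m := by
  induction m generalizing G with
  | zero =>
    obtain ⟨f, rfl, rfl, -⟩ := h
    simp
  | succ m ih =>
    obtain ⟨f, rfl, hm, hstep⟩ := h
    have hfirst := (hstep 0 m.succ_pos).sum_abs_J_le T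
    have hrest := ih ⟨fun i => f (i + 1), rfl, hm, fun i hi => hstep (i + 1) (by omega)⟩
    push_cast
    linarith

end GaussDiagram

/-- if `G` can be transformed by a sequence of `m` crossing changes into a
Gauss diagram `G'` with `W_{G'}(t) = 0`, then `∑_{k ≠ 0} |J_k(G)| ≤ 2m`. -/
theorem sum_abs_J_le_of_changedBy {n : ℕ} (m : ℕ) (G G' : GaussDiagram n)
    (h : GaussDiagram.ChangedBy m G G') (h0 : G'.writhePoly = 0) :
    ∑ᶠ (k : ℤ) (_ : k ≠ 0), |G.J k| ≤ 2 * (m : ℤ) := by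
  have hJ' : ∀ k ∈ (Finset.Icc (-n : ℤ) n).erase 0, |G'.J k| = 0 := fun k hk => by
    rw [← G'.coeff_writhePoly (Finset.ne_of_mem_erase hk), h0]
    simp
  calc ∑ᶠ (k : ℤ) (_ : k ≠ 0), |G.J k|
      = ∑ k ∈ (Finset.Icc (-n : ℤ) n).erase 0, |G.J k| := G.finsum_abs_J_eq_sum
    _ ≤ ∑ k ∈ (Finset.Icc (-n : ℤ) n).erase 0, |G'.J k| + 2 * m := h.sum_abs_J_le _
    _ = 2 * m := by rw [Finset.sum_eq_zero hJ', zero_add]
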